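/- Let R be a PID with fraction field K ≠ R. For any x ∈ M_n(K) there exist c ∈ M_n(R) and d ∈ M_n(R) ∩ GL_n(K) such that x = d^{-1}c and the block matrix [c d] ∈ M_{n×2n}(R) is primitive (its elementary divisors are all R); the ideal ν_0(x) := det(d)·R is independent of the choice of such (c,d). -/

import Mathlib

/-- A pair of square matrices `(c, d)` over `R` is *primitive* if the `n×2n`
block matrix `[c d]` is primitive, i.e. the ideal generated by its `n×n` minors
is all of `R` (equivalently, all its elementary divisors are `R`). -/
def IsPrimitivePair {R : Type*} [CommRing R] {n : ℕ}
    (c d : Matrix (Fin n) (Fin n) R) : Prop :=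
  Ideal.span {t : R | ∃ g : Fin n → (Fin n ⊕ Fin n), Function.Injective g ∧
    t = ((Matrix.fromCols c d).submatrix id g).det} = ⊤

/-!
A matrix `A` with `n` rows has unit ideal of maximal minors exactly when it has a right
inverse `B`: the adjugates of the maximal minors assemble into one, and conversely
`det (A * B)` lies in the ideal of maximal minors (the easy half of Cauchy–Binet).

Existence: clear denominators, `r • x = c₀`. Since `R` is a PID, the column module of
`[c₀ (r • 1)]` is free of rank `n`; expressing the columns in a basis factors
`[c₀ (r • 1)] = w * [c d]` with `[c d]` surjective, hence primitive, and `d * x = c`.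

Uniqueness: if `d * x = c` and `d' * x = c'`, then over `K` we have `[c' d'] = d' d⁻¹ [c d]`,
so the integral matrix `M = [c' d'] * B` satisfies `M * d = d'`. Thus `det d ∣ det d'`,
and by symmetry the two determinants are associated.
-/

namespace Matrix

section MaximalMinors

variable {R : Type*} [CommRing R] {m ι : Type*} [Fintype m] [DecidableEq m]

def maximalMinorsIdeal (A : Matrix m ι R) : Ideal R :=
  Ideal.span {t | ∃ g : m → ι, Function.Injective g ∧ t = (A.submatrix id g).det}

theorem det_mul_eq_sum_prod_mul_det_submatrix [Fintype ι] (A : Matrix m ι R)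
    (B : Matrix ι m R) :
    (A * B).det = ∑ g : m → ι, (∏ i, B (g i) i) * (A.submatrix id g).det := by
  have hrows : (A * B)ᵀ = fun i => ∑ k, B k i • Aᵀ k := by
    ext i j
    simp [Matrix.mul_apply, Finset.sum_apply, mul_comm]
  rw [← det_transpose, hrows]
  refine ((detRowAlternating (n := m) (R := R)).toMultilinearMap.map_sum
    (fun (i : m) (k : ι) => B k i • Aᵀ k)).trans (Finset.sum_congr rfl fun g _ => ?_)
  rw [AlternatingMap.coe_multilinearMap, AlternatingMap.map_smul_univ, smul_eq_mul,
    ← det_transpose (A.submatrix id g)]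
  rfl

theorem det_mul_mem_maximalMinorsIdeal [Fintype ι] (A : Matrix m ι R) (B : Matrix ι m R) :
    (A * B).det ∈ A.maximalMinorsIdeal := by
  rw [det_mul_eq_sum_prod_mul_det_submatrix]
  refine Ideal.sum_mem _ fun g _ => Ideal.mul_mem_left _ _ ?_
  by_cases hg : Function.Injective g
  · exact Ideal.subset_span ⟨g, hg, rfl⟩
  · obtain ⟨i, j, hij, hne⟩ : ∃ i j, g i = g j ∧ i ≠ j := by
      simpa [Function.Injective] using hg
    rw [← det_transpose, det_zero_of_row_eq hne (by ext k; simp [hij])]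
    exact zero_mem _

theorem exists_mul_eq_smul_one_of_mem_maximalMinorsIdeal [Fintype ι] [DecidableEq ι]
    {A : Matrix m ι R} {t : R} (ht : t ∈ A.maximalMinorsIdeal) :
    ∃ B : Matrix ι m R, A * B = t • 1 := by
  induction ht using Submodule.span_induction with
  | mem t ht =>
    obtain ⟨g, -, rfl⟩ := ht
    refine ⟨(1 : Matrix ι ι R).submatrix (Equiv.refl ι) g * adjugate (A.submatrix id g), ?_⟩
    rw [← Matrix.mul_assoc, mul_submatrix_one]
    exact mul_adjugate _
  | zero => exact ⟨0, by simp⟩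
  | add x y _ _ hx hy =>
    obtain ⟨B, hB⟩ := hx
    obtain ⟨C, hC⟩ := hy
    exact ⟨B + C, by rw [Matrix.mul_add, hB, hC, add_smul]⟩
  | smul a x _ hx =>
    obtain ⟨B, hB⟩ := hx
    exact ⟨a • B, by rw [Matrix.mul_smul, hB, smul_smul, smul_eq_mul]⟩

theorem maximalMinorsIdeal_eq_top_iff [Fintype ι] [DecidableEq ι] {A : Matrix m ι R} :
    A.maximalMinorsIdeal = ⊤ ↔ ∃ B : Matrix ι m R, A * B = 1 := by
  constructor
  · intro h
    obtain ⟨B, hB⟩ := exists_mul_eq_smul_one_of_mem_maximalMinorsIdeal (h ▸ Submodule.mem_top)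
    exact ⟨B, by rwa [one_smul] at hB⟩
  · rintro ⟨B, hB⟩
    exact (Ideal.eq_top_iff_one _).2 (by simpa [hB] using det_mul_mem_maximalMinorsIdeal A B)

end MaximalMinors

theorem exists_mul_eq_of_basis_range {R : Type*} [CommRing R] {m ι κ : Type*}
    [Fintype ι] [DecidableEq ι] [Fintype κ] [DecidableEq κ] (A : Matrix m ι R)
    (β : Module.Basis κ R (LinearMap.range A.mulVecLin)) :
    ∃ (w : Matrix m κ R) (A' : Matrix κ ι R), w * A' = A ∧ Function.Surjective A'.mulVec := by
  refine ⟨LinearMap.toMatrix' ((LinearMap.range _).subtype ∘ₗ β.equivFun.symm.toLinearMap),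
    LinearMap.toMatrix' (β.equivFun.toLinearMap ∘ₗ A.mulVecLin.rangeRestrict), ?_, ?_⟩
  · rw [← LinearMap.toMatrix'_comp]
    convert LinearMap.toMatrix'_toLin' A using 2
    exact LinearMap.ext fun v => by simp
  · intro v
    simp only [LinearMap.toMatrix'_mulVec]
    exact (β.equivFun.surjective.comp A.mulVecLin.surjective_rangeRestrict) v

theorem exists_mul_eq_of_rank_eq_card {R : Type*} [CommRing R] [IsDomain R]
    [IsPrincipalIdealRing R] {m ι : Type*} [Fintype m] [DecidableEq m] [Fintype ι]
    [DecidableEq ι] (A : Matrix m ι R) (hA : A.rank = Fintype.card m) :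
    ∃ (w : Matrix m m R) (A' : Matrix m ι R), w * A' = A ∧ A'.maximalMinorsIdeal = ⊤ := by
  obtain ⟨w, A', hwA, hA'⟩ := exists_mul_eq_of_basis_range A
    ((Module.finBasisOfFinrankEq R _ hA).reindex (Fintype.equivFin m).symm)
  exact ⟨w, A', hwA,
    maximalMinorsIdeal_eq_top_iff.2 (mulVec_surjective_iff_exists_right_inverse.1 hA')⟩

theorem rank_fromCols_of_det_ne_zero {R : Type*} [CommRing R] [IsDomain R] {m : Type*}
    [Fintype m] [DecidableEq m] (c d : Matrix m m R) (hd : d.det ≠ 0) :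
    (fromCols c d).rank = Fintype.card m := by
  refine le_antisymm (rank_le_card_height _) ?_
  calc Fintype.card m = d.rank := (rank_of_det_ne_zero hd).symm
    _ = (fromCols c d * fromRows (0 : Matrix m m R) (1 : Matrix m m R)).rank := by
      rw [fromCols_mul_fromRows, Matrix.mul_zero, Matrix.mul_one, zero_add]
    _ ≤ (fromCols c d).rank := rank_mul_le_left _ _

end Matrix

open Matrix

theorem isPrimitivePair_iff_maximalMinorsIdeal_eq_top {R : Type*} [CommRing R] {n : ℕ}
    {c d : Matrix (Fin n) (Fin n) R} :
    IsPrimitivePair c d ↔ (fromCols c d).maximalMinorsIdeal = ⊤ := Iff.rfl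

theorem exists_isPrimitivePair_mul_eq {R : Type*} [CommRing R] [IsDomain R]
    [IsPrincipalIdealRing R] {n : ℕ} (c₀ d₀ : Matrix (Fin n) (Fin n) R) (hd₀ : d₀.det ≠ 0) :
    ∃ w c d : Matrix (Fin n) (Fin n) R, IsPrimitivePair c d ∧ w * c = c₀ ∧ w * d = d₀ := by
  obtain ⟨w, A, hwA, hA⟩ :=
    exists_mul_eq_of_rank_eq_card _ (rank_fromCols_of_det_ne_zero c₀ d₀ hd₀)
  rw [← fromCols_toCols A, mul_fromCols] at hwA
  obtain ⟨hc, hd⟩ := fromCols_inj hwA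
  refine ⟨w, A.toCols₁, A.toCols₂, ?_, hc, hd⟩
  rwa [isPrimitivePair_iff_maximalMinorsIdeal_eq_top, fromCols_toCols]

theorem exists_isPrimitivePair_map_mul_eq {R : Type*} [CommRing R] [IsDomain R]
    [IsPrincipalIdealRing R] {K : Type*} [Field K] [Algebra R K] [IsFractionRing R K] {n : ℕ}
    (x : Matrix (Fin n) (Fin n) K) :
    ∃ c d : Matrix (Fin n) (Fin n) R, d.det ≠ 0 ∧
      d.map (algebraMap R K) * x = c.map (algebraMap R K) ∧ IsPrimitivePair c d := by
  obtain ⟨r, hr⟩ := IsLocalization.exist_integer_multiples_of_finite (nonZeroDivisors R)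
    (fun p : Fin n × Fin n => x p.1 p.2)
  choose c₀ hc₀ using fun i j => hr (i, j)
  have hr₀ : (r : R) ≠ 0 := nonZeroDivisors.ne_zero r.2
  obtain ⟨w, c, d, hp, hwc, hwd⟩ := exists_isPrimitivePair_mul_eq (of c₀) ((r : R) • 1)
    (by simp [hr₀])
  have hdet : w.det * d.det ≠ 0 := by
    rw [← det_mul, hwd, det_smul, det_one, mul_one]
    exact pow_ne_zero _ hr₀
  have hw : IsUnit (w.map (algebraMap R K)) := by
    rw [isUnit_iff_isUnit_det, show (w.map _).det = algebraMap R K w.det from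
      (RingHom.map_det _ _).symm, isUnit_iff_ne_zero,
      map_ne_zero_iff _ (IsFractionRing.injective R K)]
    exact left_ne_zero_of_mul hdet
  refine ⟨c, d, right_ne_zero_of_mul hdet, hw.mul_left_cancel ?_, hp⟩
  rw [← Matrix.mul_assoc, ← Matrix.map_mul, hwd, ← Matrix.map_mul, hwc]
  ext i j
  simp [Matrix.algebraMap_eq_diagonal, Algebra.smul_def, hc₀ i j]

theorem IsPrimitivePair.det_dvd_det {R K : Type*} [CommRing R] [CommRing K] {φ : R →+* K}
    (hφ : Function.Injective φ) {n : ℕ} {x : Matrix (Fin n) (Fin n) K}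
    {c d c' d' : Matrix (Fin n) (Fin n) R} (hp : IsPrimitivePair c d)
    (hx : d.map φ * x = c.map φ) (hx' : d'.map φ * x = c'.map φ) : d.det ∣ d'.det := by
  obtain ⟨B, hB⟩ := maximalMinorsIdeal_eq_top_iff.1 hp
  have hfactor : ∀ {c d : Matrix (Fin n) (Fin n) R}, d.map φ * x = c.map φ →
      (fromCols c d).map φ = d.map φ * fromCols x (1 : Matrix (Fin n) (Fin n) K) := by
    intro c d h
    rw [mul_fromCols, h, Matrix.mul_one, fromCols_map]
  have hinv : d.map φ * (fromCols x (1 : Matrix (Fin n) (Fin n) K) * B.map φ) = 1 := by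
    rw [← Matrix.mul_assoc, ← hfactor hx, ← Matrix.map_mul, hB,
      Matrix.map_one _ (map_zero φ) (map_one φ)]
  have hd' : fromCols c' d' * B * d = d' := by
    apply map_injective hφ
    beta_reduce
    rw [Matrix.map_mul, Matrix.map_mul, hfactor hx', Matrix.mul_assoc, Matrix.mul_assoc,
      ← Matrix.mul_assoc (fromCols x 1), mul_eq_one_comm.1 hinv, Matrix.mul_one]
  exact Dvd.intro_left _ (by rw [← det_mul, hd'])

/-- Denominator ideal over a PID: for any `x ∈ M_n(K)` with `K` the fraction
field of a PID `R`, there exist `c ∈ M_n(R)` and `d ∈ M_n(R) ∩ GL_n(K)` with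
`x = d^{-1}·c` and `[c d]` primitive; and the ideal `ν₀(x) := det(d)·R` is
independent of the choice of such a pair `(c, d)`. -/
theorem denominator_ideal_well_defined
    (R : Type*) [CommRing R] [IsDomain R] [IsPrincipalIdealRing R]
    (K : Type*) [Field K] [Algebra R K] [IsFractionRing R K]
    (n : ℕ) (x : Matrix (Fin n) (Fin n) K) :
    ∃ (c d : Matrix (Fin n) (Fin n) R),
      d.det ≠ 0 ∧ d.map (algebraMap R K) * x = c.map (algebraMap R K) ∧
      IsPrimitivePair c d ∧
      ∀ (c' d' : Matrix (Fin n) (Fin n) R), d'.det ≠ 0 →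
        d'.map (algebraMap R K) * x = c'.map (algebraMap R K) →
        IsPrimitivePair c' d' →
        Ideal.span {d.det} = Ideal.span ({d'.det} : Set R) := by
  obtain ⟨c, d, hd, hx, hp⟩ := exists_isPrimitivePair_map_mul_eq (R := R) x
  refine ⟨c, d, hd, hx, hp, fun c' d' _ hx' hp' => ?_⟩
  have hφ := IsFractionRing.injective R K
  exact Ideal.span_singleton_eq_span_singleton.2
    (associated_of_dvd_dvd (hp.det_dvd_det hφ hx hx') (hp'.det_dvd_det hφ hx' hx))
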